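/- Let A_S be the automaton over Σ_k^2 with states {q₀, q₁, s}, initial state q₀, and transitions: (q₀, (k−1, 0), q₀); (q₀, (a, a+1), q₁) for every a ∈ {0,…,k−2}; (q₁, (a, a), q₁) for every a ∈ {0,…,k−1}; and all remaining letter–state pairs lead to the sink s (including (s, ·, s)). Then for all x, y, n ∈ ℕ: (x mod k^n = k^n − 1 and y mod k^n = 0) if and only if W_{A_S,q₀}(x, y, n); and (x mod k^n) + 1 = y mod k^n if and only if W_{A_S,q₁}(x, y, n). -/

import Mathlib

/-- The `i`-th base-`k` digit of `x`. -/
def digit (k x i : ℕ) : ℕ := x / k ^ i % k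

/-- A finite automaton over the alphabet `Σ_k^m = (Fin k)^m`. -/
structure FA (k m : ℕ) where
  Q : Type
  fin : Finite Q
  q0 : Q
  acc : Set Q
  δ : Set (Q × (Fin m → Fin k) × Q)

/-- The run predicate `W_{A,q₁}(x⃗, n)`: the automaton `A` can reach state `q₁`
after reading the first `n` base-`k` digits of `x⃗`, the run being encoded by a
family `(w_q)` of natural numbers. -/
def FA.W {k m : ℕ} (A : FA k m) (q1 : A.Q) (x : Fin m → ℕ) (n : ℕ) : Prop :=
  ∃ w : A.Q → ℕ,
    (∀ q, w q < k ^ (n + 1)) ∧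
    (∀ i ≤ n, ∃ q, digit k (w q) i = 1 ∧ ∀ q' ≠ q, digit k (w q') i = 0) ∧
    digit k (w A.q0) 0 = 1 ∧ digit k (w q1) n = 1 ∧
    ∀ i < n, ∀ q, digit k (w q) i = 1 →
      ∃ a : Fin m → Fin k, ∃ q', (q, a, q') ∈ A.δ ∧ digit k (w q') (i + 1) = 1 ∧
        ∀ j, digit k (x j) i = (a j : ℕ)

/-- The automaton `A_S` recognizing `S(x) = y`: states `q₀ = 0`, `q₁ = 1` and a
sink `s = 2`; transitions `(q₀,(k-1,0),q₀)`, `(q₀,(a,a+1),q₁)` for `a ≤ k-2`,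
`(q₁,(a,a),q₁)`, and all remaining letter–state pairs go to the sink. -/
def AS (k : ℕ) : FA k 2 where
  Q := Fin 3
  fin := inferInstance
  q0 := 0
  acc := {1}
  δ := {t | (t.1 = 0 ∧ ((t.2.1 0 : ℕ) = k - 1 ∧ (t.2.1 1 : ℕ) = 0) ∧ t.2.2 = 0) ∨
            (t.1 = 0 ∧ ((t.2.1 0 : ℕ) + 1 = (t.2.1 1 : ℕ)) ∧ t.2.2 = 1) ∨
            (t.1 = 1 ∧ (t.2.1 0 = t.2.1 1) ∧ t.2.2 = 1) ∨
            (t.1 = 0 ∧ ¬((t.2.1 0 : ℕ) = k - 1 ∧ (t.2.1 1 : ℕ) = 0) ∧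
              ¬((t.2.1 0 : ℕ) + 1 = (t.2.1 1 : ℕ)) ∧ t.2.2 = 2) ∨
            (t.1 = 1 ∧ t.2.1 0 ≠ t.2.1 1 ∧ t.2.2 = 2) ∨
            (t.1 = 2 ∧ t.2.2 = 2)}

/-!
A run of `A` is encoded by one number `w q` per state whose base-`k` digits mark the
positions at which the run visits `q`. Cutting every `w q` below position `n + 1`, or adding
`k ^ (n + 1)` to the `w q` of the target state, shows that `W` satisfies the usual recursion of
reachability: state `q'` is reachable after `n + 1` digits iff it is reached by one transition,
reading the `n`-th digits, from a state reachable after `n` digits. For `A_S` this is the carry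
recursion of `x % k ^ n + 1 = y % k ^ n`: either no carry reaches digit `n` and the digits
agree, or the carry stops there (all lower digits `k - 1` against `0`, and
`digit y n = digit x n + 1`), so both claims follow by a simultaneous induction on `n`.
-/

theorem digit_lt {k : ℕ} (hk : 0 < k) (x i : ℕ) : digit k x i < k :=
  Nat.mod_lt _ hk

theorem digit_eq_zero_of_lt {k w i : ℕ} (hw : w < k ^ i) : digit k w i = 0 := by
  rw [digit, Nat.div_eq_of_lt hw, Nat.zero_mod]

theorem digit_mod_pow {k i n : ℕ} (x : ℕ) (h : i < n) : digit k (x % k ^ n) i = digit k x i := by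
  have hpow : k ^ n = k ^ i * (k * k ^ (n - i - 1)) := by
    rw [← pow_succ', ← pow_add]; congr 1; omega
  rw [digit, digit, hpow, Nat.mod_mul_right_div_self, Nat.mod_mod_of_dvd _ (dvd_mul_right k _)]

theorem digit_add_pow_of_lt {k i n : ℕ} (w : ℕ) (h : i < n) :
    digit k (w + k ^ n) i = digit k w i := by
  rw [← digit_mod_pow _ h, Nat.add_mod_right, digit_mod_pow _ h]

theorem digit_add_pow_self {k n w : ℕ} (hk : 1 < k) (hw : w < k ^ n) :
    digit k (w + k ^ n) n = 1 := by
  rw [digit, Nat.add_div_right _ (by positivity), Nat.div_eq_of_lt hw, Nat.mod_eq_of_lt hk]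

def digitLetter {k m : ℕ} (hk : 0 < k) (x : Fin m → ℕ) (i : ℕ) : Fin m → Fin k :=
  fun j => ⟨digit k (x j) i, digit_lt hk _ _⟩

theorem eq_digitLetter {k m : ℕ} (hk : 0 < k) {x : Fin m → ℕ} {i : ℕ} {a : Fin m → Fin k}
    (h : ∀ j, digit k (x j) i = a j) : a = digitLetter hk x i :=
  funext fun j => Fin.ext (h j).symm

theorem eq_of_digit_eq_one {k i : ℕ} {Q : Type} {w : Q → ℕ}
    (hu : ∃ q, digit k (w q) i = 1 ∧ ∀ q' ≠ q, digit k (w q') i = 0) {a b : Q}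
    (ha : digit k (w a) i = 1) (hb : digit k (w b) i = 1) : a = b := by
  obtain ⟨q, -, hq⟩ := hu
  have hmem : ∀ r, digit k (w r) i = 1 → r = q := fun r hr => by
    by_contra hne; rw [hq r hne] at hr; exact zero_ne_one hr
  rw [hmem a ha, hmem b hb]

namespace FA

variable {k m : ℕ} (A : FA k m)

theorem W_zero_iff (hk : 1 < k) (q : A.Q) (x : Fin m → ℕ) : A.W q x 0 ↔ q = A.q0 := by
  classical
  constructor
  · rintro ⟨w, -, hu, h0, hq, -⟩
    exact eq_of_digit_eq_one (hu 0 le_rfl) hq h0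
  · rintro rfl
    have h1 : digit k 1 0 = 1 := by simp [digit, Nat.mod_eq_of_lt hk]
    have h0 : digit k 0 0 = 0 := by simp [digit]
    refine ⟨fun q' => if q' = A.q0 then 1 else 0, fun q' => ?_, fun i hi => ?_, ?_, ?_, ?_⟩
    · dsimp only; split_ifs <;> simp only [zero_add, pow_one] <;> omega
    · obtain rfl : i = 0 := Nat.le_zero.mp hi
      exact ⟨A.q0, by simp [h1], fun q' hq' => by simp [h0, hq']⟩
    all_goals simp [h1]

variable {A}

theorem exists_W_of_W_succ (hk : 1 < k) {q' : A.Q} {x : Fin m → ℕ} {n : ℕ}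
    (hW : A.W q' x (n + 1)) :
    ∃ q, A.W q x n ∧ (q, digitLetter (Nat.zero_lt_of_lt hk) x n, q') ∈ A.δ := by
  obtain ⟨w, -, hu, h0, hq', hstep⟩ := hW
  obtain ⟨q, hq, -⟩ := hu n n.le_succ
  obtain ⟨a, r, hδ, hr, ha⟩ := hstep n n.lt_succ_self q hq
  obtain rfl : r = q' := eq_of_digit_eq_one (hu (n + 1) le_rfl) hr hq'
  obtain rfl := eq_digitLetter (Nat.zero_lt_of_lt hk) ha
  have htrunc : ∀ s, ∀ i ≤ n, digit k (w s % k ^ (n + 1)) i = digit k (w s) i :=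
    fun s i hi => digit_mod_pow _ (Nat.lt_succ_of_le hi)
  refine ⟨q, ⟨fun s => w s % k ^ (n + 1), fun s => Nat.mod_lt _ (by positivity),
    fun i hi => ?_, ?_, ?_, fun i hi s hs => ?_⟩, hδ⟩
  · simpa only [htrunc _ i hi] using hu i (by omega)
  · rwa [htrunc _ 0 n.zero_le]
  · rwa [htrunc _ n le_rfl]
  · rw [htrunc _ i hi.le] at hs
    obtain ⟨b, s', hδ', hs', hb⟩ := hstep i (by omega) s hs
    exact ⟨b, s', hδ', by rwa [htrunc _ (i + 1) hi], hb⟩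

theorem W_succ_of_W (hk : 1 < k) {q q' : A.Q} {x : Fin m → ℕ} {n : ℕ} (hW : A.W q x n)
    (hδ : (q, digitLetter (Nat.zero_lt_of_lt hk) x n, q') ∈ A.δ) : A.W q' x (n + 1) := by
  classical
  obtain ⟨w, hlt, hu, h0, hq, hstep⟩ := hW
  set w' : A.Q → ℕ := fun s => w s + if s = q' then k ^ (n + 1) else 0
  have hlow : ∀ s, ∀ i ≤ n, digit k (w' s) i = digit k (w s) i := fun s i hi => by
    simp only [w']
    split_ifs
    exacts [digit_add_pow_of_lt _ (Nat.lt_succ_of_le hi), by rw [add_zero]]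
  have htop : ∀ s, digit k (w' s) (n + 1) = if s = q' then 1 else 0 := fun s => by
    simp only [w']
    split_ifs
    exacts [digit_add_pow_self hk (hlt s), by rw [add_zero, digit_eq_zero_of_lt (hlt s)]]
  refine ⟨w', fun s => ?_, fun i hi => ?_, ?_, by simp [htop], fun i hi s hs => ?_⟩
  · have hpow : k ^ (n + 1) * 2 ≤ k ^ (n + 1 + 1) := by
      rw [pow_succ _ (n + 1)]; exact Nat.mul_le_mul_left _ hk
    have := hlt s
    simp only [w']
    split_ifs <;> omega
  · rcases Nat.le_succ_iff.mp hi with hi | rfl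
    · simpa only [hlow _ i hi] using hu i hi
    · exact ⟨q', by simp [htop], fun s hs => by simp [htop, hs]⟩
  · rwa [hlow _ 0 n.zero_le]
  · rw [hlow _ i (by omega)] at hs
    rcases Nat.lt_succ_iff_lt_or_eq.mp hi with hi | rfl
    · obtain ⟨b, s', hδ', hs', hb⟩ := hstep i hi s hs
      exact ⟨b, s', hδ', by rwa [hlow _ (i + 1) hi], hb⟩
    · obtain rfl : s = q := eq_of_digit_eq_one (hu i le_rfl) hs hq
      exact ⟨_, q', hδ, by simp [htop], fun j => rfl⟩

theorem W_succ_iff (hk : 1 < k) (q' : A.Q) (x : Fin m → ℕ) (n : ℕ) :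
    A.W q' x (n + 1) ↔
      ∃ q, A.W q x n ∧ (q, digitLetter (Nat.zero_lt_of_lt hk) x n, q') ∈ A.δ :=
  ⟨exists_W_of_W_succ hk, fun ⟨_, hW, hδ⟩ => W_succ_of_W hk hW hδ⟩

end FA

theorem AS_mem_δ_to_zero_iff {k : ℕ} {q : Fin 3} {a : Fin 2 → Fin k} :
    ((q, a, 0) : Fin 3 × (Fin 2 → Fin k) × Fin 3) ∈ (AS k).δ ↔
      q = 0 ∧ (a 0 : ℕ) = k - 1 ∧ (a 1 : ℕ) = 0 := by
  show _ ∨ _ ↔ _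
  simp

theorem AS_mem_δ_to_one_iff {k : ℕ} {q : Fin 3} {a : Fin 2 → Fin k} :
    ((q, a, 1) : Fin 3 × (Fin 2 → Fin k) × Fin 3) ∈ (AS k).δ ↔
      (q = 0 ∧ (a 0 : ℕ) + 1 = a 1) ∨ (q = 1 ∧ a 0 = a 1) := by
  show _ ∨ _ ↔ _
  simp

theorem AS_W_zero_succ_iff {k : ℕ} (hk : 1 < k) (x : Fin 2 → ℕ) (n : ℕ) :
    (AS k).W (0 : Fin 3) x (n + 1) ↔
      (AS k).W (0 : Fin 3) x n ∧ digit k (x 0) n = k - 1 ∧ digit k (x 1) n = 0 := by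
  refine (FA.W_succ_iff (A := AS k) hk (0 : Fin 3) x n).trans ⟨?_, ?_⟩
  · rintro ⟨q, hW, hδ⟩
    obtain ⟨rfl, hx, hy⟩ := AS_mem_δ_to_zero_iff.mp hδ
    exact ⟨hW, hx, hy⟩
  · rintro ⟨hW, hx, hy⟩
    exact ⟨(0 : Fin 3), hW, AS_mem_δ_to_zero_iff.mpr ⟨rfl, hx, hy⟩⟩

theorem AS_W_one_succ_iff {k : ℕ} (hk : 1 < k) (x : Fin 2 → ℕ) (n : ℕ) :
    (AS k).W (1 : Fin 3) x (n + 1) ↔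
      ((AS k).W (0 : Fin 3) x n ∧ digit k (x 0) n + 1 = digit k (x 1) n) ∨
        ((AS k).W (1 : Fin 3) x n ∧ digit k (x 0) n = digit k (x 1) n) := by
  refine (FA.W_succ_iff (A := AS k) hk (1 : Fin 3) x n).trans ⟨?_, ?_⟩
  · rintro ⟨q, hW, hδ⟩
    rcases AS_mem_δ_to_one_iff.mp hδ with ⟨rfl, hxy⟩ | ⟨rfl, hxy⟩
    exacts [Or.inl ⟨hW, hxy⟩, Or.inr ⟨hW, congrArg Fin.val hxy⟩]
  · rintro (⟨hW, hxy⟩ | ⟨hW, hxy⟩)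
    exacts [⟨(0 : Fin 3), hW, AS_mem_δ_to_one_iff.mpr (Or.inl ⟨rfl, hxy⟩)⟩,
      ⟨(1 : Fin 3), hW, AS_mem_δ_to_one_iff.mpr (Or.inr ⟨rfl, Fin.ext hxy⟩)⟩]

theorem add_mul_eq_add_mul_iff {P a b c d : ℕ} (ha : a < P) (hb : b < P) :
    a + P * c = b + P * d ↔ a = b ∧ c = d := by
  refine ⟨fun h => ?_, fun ⟨hab, hcd⟩ => hab ▸ hcd ▸ rfl⟩
  obtain ⟨hc, ha'⟩ := (Nat.div_mod_unique (by omega)).mpr ⟨h, ha⟩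
  obtain ⟨hd, hb'⟩ := (Nat.div_mod_unique (by omega)).mpr ⟨rfl, hb⟩
  exact ⟨ha'.symm.trans hb', hc.symm.trans hd⟩

theorem add_mul_add_one_eq_add_mul_iff {P a b c d : ℕ} (ha : a < P) (hb : b < P) :
    a + P * c + 1 = b + P * d ↔ (a = P - 1 ∧ b = 0) ∧ c + 1 = d ∨ a + 1 = b ∧ c = d := by
  by_cases hcarry : a + 1 = P
  · have hlhs : a + P * c + 1 = 0 + P * (c + 1) := by rw [mul_add_one]; omega
    rw [hlhs, add_mul_eq_add_mul_iff (by omega) hb]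
    omega
  · have hlhs : a + P * c + 1 = (a + 1) + P * c := by omega
    rw [hlhs, add_mul_eq_add_mul_iff (by omega) hb]
    omega

theorem mod_pow_succ_eq_pow_succ_sub_one_iff {k : ℕ} (hk : 0 < k) (x n : ℕ) :
    x % k ^ (n + 1) = k ^ (n + 1) - 1 ↔ x % k ^ n = k ^ n - 1 ∧ digit k x n = k - 1 := by
  have hpos : 0 < k ^ n := by positivity
  have hsub : k ^ (n + 1) - 1 = (k ^ n - 1) + k ^ n * (k - 1) := by
    rw [pow_succ, Nat.mul_sub_one]
    have : k ^ n ≤ k ^ n * k := Nat.le_mul_of_pos_right _ hk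
    omega
  rw [Nat.mod_pow_succ, hsub, add_mul_eq_add_mul_iff (Nat.mod_lt _ hpos) (by omega)]
  rfl

theorem mod_pow_succ_eq_zero_iff {k : ℕ} (hk : 0 < k) (y n : ℕ) :
    y % k ^ (n + 1) = 0 ↔ y % k ^ n = 0 ∧ digit k y n = 0 := by
  rw [Nat.mod_pow_succ, Nat.add_eq_zero_iff, mul_eq_zero, or_iff_right (by positivity)]
  rfl

theorem mod_pow_succ_add_one_eq_iff {k : ℕ} (hk : 0 < k) (x y n : ℕ) :
    x % k ^ (n + 1) + 1 = y % k ^ (n + 1) ↔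
      ((x % k ^ n = k ^ n - 1 ∧ y % k ^ n = 0) ∧ digit k x n + 1 = digit k y n) ∨
        (x % k ^ n + 1 = y % k ^ n ∧ digit k x n = digit k y n) := by
  have hpos : 0 < k ^ n := by positivity
  rw [Nat.mod_pow_succ, Nat.mod_pow_succ,
    add_mul_add_one_eq_add_mul_iff (Nat.mod_lt _ hpos) (Nat.mod_lt _ hpos)]
  rfl

/-- `A_S` computes the successor on residues modulo `k^n`:
state `q₀` is reached iff `x ≡ k^n - 1` and `y ≡ 0`, and state `q₁` is reached
iff `(x mod k^n) + 1 = y mod k^n`. -/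
theorem stmt16 (k : ℕ) (hk : 2 ≤ k) :
    ∀ x y n : ℕ,
      ((x % k ^ n = k ^ n - 1 ∧ y % k ^ n = 0) ↔ (AS k).W (0 : Fin 3) ![x, y] n) ∧
      ((x % k ^ n) + 1 = y % k ^ n ↔ (AS k).W (1 : Fin 3) ![x, y] n) := by
  intro x y n
  induction n with
  | zero => simp [FA.W_zero_iff _ hk, AS, Nat.mod_one]
  | succ n ih =>
    have hk₀ : 0 < k := by omega
    rw [AS_W_zero_succ_iff hk, AS_W_one_succ_iff hk, mod_pow_succ_eq_pow_succ_sub_one_iff hk₀,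
      mod_pow_succ_eq_zero_iff hk₀, mod_pow_succ_add_one_eq_iff hk₀, ← ih.1, ← ih.2]
    simp only [Matrix.cons_val_zero, Matrix.cons_val_one]
    tauto
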